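/- Let q' : B' → B and q'' : B'' → B be homomorphisms of commutative rings with q'' surjective, let P = B' ×_B B'' be the fiber product ring with projections p₁ : P → B' and p₂ : P → B'', and regard B' and B'' as P-algebras via p₁ and p₂. Then the natural ring homomorphism B' ⊗_P B'' → B induced by the P-bilinear map (b', b'') ↦ q'(b') · q''(b'') is an isomorphism of rings. -/

import Mathlib

open scoped TensorProduct

/-- The fiber product `B' ×_B B''` of two ring homomorphisms `q' : B' → B` and
`q'' : B'' → B`, as the subring of `B' × B''` of pairs `(b', b'')` with `q' b' = q'' b''`. -/
def fiberProduct {B B' B'' : Type*} [CommRing B] [CommRing B'] [CommRing B'']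
    (q' : B' →+* B) (q'' : B'' →+* B) : Subring (B' × B'') :=
  RingHom.eqLocus (q'.comp (RingHom.fst B' B'')) (q''.comp (RingHom.snd B' B''))

/-! If `R → S` is surjective, every element of `S ⊗[R] T` is of the form `1 ⊗ t`, and
`1 ⊗ t` vanishes as soon as `t` comes from an element of `R` killed in `S`. Both facts apply to
`B' ⊗_P B''`: the projection `P → B'` is onto because `q''` is, and an element of `ker q''`
is the image of `(0, b'') ∈ ker (P → B')`. -/

namespace Algebra.TensorProduct

variable {R S T U : Type*} [CommRing R] [CommRing S] [CommRing T] [CommSemiring U]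
  [Algebra R S] [Algebra R T] [Algebra R U]

theorem map_ker_algebraMap_le_ker_includeRight :
    (RingHom.ker (algebraMap R S)).map (algebraMap R T) ≤
      RingHom.ker (includeRight : T →ₐ[R] S ⊗[R] T) := by
  rw [Ideal.map_le_iff_le_comap]
  intro r hr
  rw [RingHom.mem_ker] at hr
  rw [Ideal.mem_comap, RingHom.mem_ker, AlgHom.commutes, algebraMap_apply, hr,
    TensorProduct.zero_tmul]

theorem productMap_bijective_of_surjective {f : S →ₐ[R] U} {g : T →ₐ[R] U}
    (hS : Function.Surjective (algebraMap R S)) (hg : Function.Surjective g)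
    (hker : RingHom.ker g ≤ (RingHom.ker (algebraMap R S)).map (algebraMap R T)) :
    Function.Bijective (productMap f g) := by
  have hcomp : (productMap f g).comp includeRight = g := by ext t; simp
  have hincl := includeRight_surjective T hS
  refine ⟨?_, fun u => ?_⟩
  · rw [injective_iff_map_eq_zero]
    intro x hx
    obtain ⟨t, rfl⟩ := hincl x
    have ht : t ∈ RingHom.ker g := by rw [RingHom.mem_ker, ← hcomp]; exact hx
    exact map_ker_algebraMap_le_ker_includeRight (hker ht)
  · obtain ⟨t, rfl⟩ := hg u
    exact ⟨includeRight t, by rw [← AlgHom.comp_apply, hcomp]⟩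

end Algebra.TensorProduct

section FiberProduct

variable {B B' B'' : Type*} [CommRing B] [CommRing B'] [CommRing B'']
  {q' : B' →+* B} {q'' : B'' →+* B}

theorem fiberProduct_fst_surjective (hq'' : Function.Surjective q'') :
    Function.Surjective ((RingHom.fst B' B'').comp (fiberProduct q' q'').subtype) := by
  intro b'
  obtain ⟨c'', hc''⟩ := hq'' (q' b')
  exact ⟨⟨(b', c''), hc''.symm⟩, rfl⟩

theorem ker_le_map_snd_ker_fst :
    RingHom.ker q'' ≤
      (RingHom.ker ((RingHom.fst B' B'').comp (fiberProduct q' q'').subtype)).map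
        ((RingHom.snd B' B'').comp (fiberProduct q' q'').subtype) := by
  intro b'' hb''
  have hmem : ((0 : B'), b'') ∈ fiberProduct q' q'' :=
    (map_zero q').trans (RingHom.mem_ker.mp hb'').symm
  exact Ideal.mem_map_of_mem _ (show (⟨(0, b''), hmem⟩ : fiberProduct q' q'') ∈ _ from rfl)

end FiberProduct

/-- For `q' : B' → B`, `q'' : B'' → B` ring homomorphisms with `q''` surjective, and
`P = B' ×_B B''` the fiber product with projections `p₁, p₂`, regarding `B'` and `B''` as
`P`-algebras via `p₁` and `p₂`, the natural ring homomorphism `B' ⊗_P B'' → B` induced by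
`(b', b'') ↦ q'(b') · q''(b'')` is an isomorphism of rings. -/
theorem fiberProduct_tensor_iso {B B' B'' : Type*} [CommRing B] [CommRing B'] [CommRing B'']
    (q' : B' →+* B) (q'' : B'' →+* B) (hq'' : Function.Surjective q'') :
    letI : Algebra (fiberProduct q' q'') B' :=
      ((RingHom.fst B' B'').comp (fiberProduct q' q'').subtype).toAlgebra
    letI : Algebra (fiberProduct q' q'') B'' :=
      ((RingHom.snd B' B'').comp (fiberProduct q' q'').subtype).toAlgebra
    ∃ e : TensorProduct (fiberProduct q' q'') B' B'' ≃+* B,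
      ∀ (b' : B') (b'' : B''), e (b' ⊗ₜ b'') = q' b' * q'' b'' := by
  let _ : Algebra (fiberProduct q' q'') B' :=
    ((RingHom.fst B' B'').comp (fiberProduct q' q'').subtype).toAlgebra
  let _ : Algebra (fiberProduct q' q'') B'' :=
    ((RingHom.snd B' B'').comp (fiberProduct q' q'').subtype).toAlgebra
  let _ : Algebra (fiberProduct q' q'') B :=
    (q'.comp ((RingHom.fst B' B'').comp (fiberProduct q' q'').subtype)).toAlgebra
  let f : B' →ₐ[fiberProduct q' q''] B := { q' with commutes' := fun _ => rfl }
  let g : B'' →ₐ[fiberProduct q' q''] B := { q'' with commutes' := fun p => p.2.symm }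
  have hbij := Algebra.TensorProduct.productMap_bijective_of_surjective (f := f) (g := g)
    (fiberProduct_fst_surjective hq'') hq'' ker_le_map_snd_ker_fst
  exact ⟨RingEquiv.ofBijective _ hbij, fun _ _ => rfl⟩
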